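/- Let k ≥ 2 be an integer and let F be a forest (a finite simple acyclic graph) on n vertices with n^{1/3} ≥ 2k − 1 (real cube root). Then f_k(F) ≤ (2k − 1)·⌊n^{1/3}⌋. -/

import Mathlib

open Finset

variable {V : Type*}

open scoped Classical in
/-- Degree of `v` in the subgraph of `G` induced on the vertex set `A`
(number of neighbours of `v` inside `A`). -/
noncomputable def degOn (G : SimpleGraph V) (A : Finset V) (v : V) : ℕ :=
  (A.filter fun w => G.Adj v w).card

/-- Maximum degree of the subgraph of `G` induced on `A`. -/
noncomputable def maxDegOn (G : SimpleGraph V) (A : Finset V) : ℕ :=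
  A.sup (degOn G A)

open scoped Classical in
/-- The subgraph of `G` induced on `A` has fewer than `k` vertices or at least `k`
vertices realising its maximum degree. -/
def equates (G : SimpleGraph V) (k : ℕ) (A : Finset V) : Prop :=
  A.card < k ∨ k ≤ (A.filter fun v => degOn G A v = maxDegOn G A).card

open scoped Classical in
/-- `f_k` of the subgraph of `G` induced on `A`: the minimum number of vertices of `A`
whose deletion leaves an induced subgraph with fewer than `k` vertices or with at
least `k` vertices realising its maximum degree. -/
noncomputable def fkOn (G : SimpleGraph V) (k : ℕ) (A : Finset V) : ℕ :=
  sInf {m | ∃ S, S ⊆ A ∧ S.card = m ∧ equates G k (A \ S)}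

/-- `f_k(G)`. -/
noncomputable def fk [Fintype V] (G : SimpleGraph V) (k : ℕ) : ℕ :=
  fkOn G k Finset.univ

/-- `diff` of the subgraph of `G` induced on `A`: the largest degree minus the
second-largest degree (with multiplicity) of this subgraph. -/
noncomputable def diffOn (G : SimpleGraph V) (A : Finset V) : ℕ :=
  maxDegOn G A - ((A.val.map (degOn G A)).erase (maxDegOn G A)).sup

/-- `diff(G) = d₁ - d₂`, the difference between the largest and second-largest
vertex degrees of `G`. -/
noncomputable def diffDeg [Fintype V] (G : SimpleGraph V) : ℕ :=
  diffOn G Finset.univ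

/-!
Write `P = k - 1`. Suppose `b` deletions cannot equate a forest `A` of maximum degree `Δ`, and
let `c` be its `k`-th largest degree. Two strategies must then cost more than `b`: deleting the
at most `P` vertices of degree above `c` and then, repeatedly, all vertices of maximum degree
(cost `P (c + 1)`); and lowering `k` vertices of degree `≥ c` to degree exactly `c` by deleting
private neighbours, which exist because two vertices of a forest share at most one neighbour
(cost `P (Δ - c)`). Hence `c ≥ 2P` and `P c + b < P Δ`. Removing the `P` vertices above `c`
leaves a forest of maximum degree at most `c` that `b - P` deletions cannot equate, so induction
on `b` gives `θ(b + 1) ≤ 2 P² Δ` for `θ(u) = (u - 2P² - P)₊ (u - P²)₊`. Deleting vertices of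
maximum degree one at a time and summing, `∑_{u ≤ b+1} θ(u)` is at most `P²` times the degree
sum, hence at most `2 P² (n - 1)` for a forest on `n` vertices; for `b = (2k - 1) ⌊n^{1/3}⌋`
this is false.
-/

section Equating

open scoped Classical
open SimpleGraph

variable {G : SimpleGraph V} {A B : Finset V} {v x : V} {k : ℕ}

lemma degOn_mono (h : A ⊆ B) (v : V) : degOn G A v ≤ degOn G B v :=
  card_le_card (filter_subset_filter _ h)

lemma degOn_le_maxDegOn (hv : v ∈ A) : degOn G A v ≤ maxDegOn G A := le_sup hv

lemma exists_degOn_eq_maxDegOn (hA : A.Nonempty) : ∃ v ∈ A, degOn G A v = maxDegOn G A := by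
  obtain ⟨v, hv, h⟩ := exists_mem_eq_sup A hA (degOn G A)
  exact ⟨v, hv, h.symm⟩

lemma degOn_erase_of_not_adj (h : ¬ G.Adj v x) : degOn G (A.erase x) v = degOn G A v := by
  rw [degOn, filter_erase, erase_eq_of_notMem (by simp [h])]
  rfl

lemma degOn_erase_add_one_of_adj (hx : x ∈ A) (h : G.Adj v x) :
    degOn G (A.erase x) v + 1 = degOn G A v := by
  rw [degOn, filter_erase, card_erase_add_one (mem_filter.2 ⟨hx, h⟩)]
  rfl

lemma degOn_eq_degOn_erase_add (x : V) (hx : x ∈ A) :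
    degOn G A v = degOn G (A.erase x) v + if G.Adj v x then 1 else 0 := by
  split_ifs with h
  · exact (degOn_erase_add_one_of_adj hx h).symm
  · rw [degOn_erase_of_not_adj h, add_zero]

noncomputable def degSumOn (G : SimpleGraph V) (A : Finset V) : ℕ := ∑ v ∈ A, degOn G A v

lemma degSumOn_eq_degSumOn_erase_add (hx : x ∈ A) :
    degSumOn G A = degSumOn G (A.erase x) + 2 * degOn G A x := by
  have hcount : ∑ v ∈ A.erase x, (if G.Adj v x then 1 else 0) = degOn G A x := by
    rw [← card_filter, degOn]
    congr 1
    ext w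
    simp only [mem_filter, mem_erase]
    exact ⟨fun ⟨⟨_, hw⟩, h⟩ => ⟨hw, h.symm⟩, fun ⟨hw, h⟩ => ⟨⟨h.ne', hw⟩, h.symm⟩⟩
  rw [degSumOn, degSumOn, ← add_sum_erase _ _ hx,
    sum_congr rfl fun v _ => degOn_eq_degOn_erase_add x hx, sum_add_distrib, hcount]
  ring

def Equatable (G : SimpleGraph V) (k : ℕ) (A : Finset V) (b : ℕ) : Prop :=
  ∃ S ⊆ A, #S ≤ b ∧ equates G k (A \ S)

namespace Equatable

variable {b b' : ℕ}

lemma of_equates (h : equates G k A) (b : ℕ) : Equatable G k A b :=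
  ⟨∅, empty_subset _, by simp, by simpa using h⟩

lemma mono (h : Equatable G k A b) (hb : b ≤ b') : Equatable G k A b' := by
  obtain ⟨S, hSA, hS, heq⟩ := h
  exact ⟨S, hSA, hS.trans hb, heq⟩

lemma of_sdiff {D : Finset V} (hD : D ⊆ A) (h : Equatable G k (A \ D) b) :
    Equatable G k A (#D + b) := by
  obtain ⟨S, hSA, hS, heq⟩ := h
  refine ⟨D ∪ S, union_subset hD (hSA.trans sdiff_subset),
    (card_union_le _ _).trans (by omega), ?_⟩
  rwa [sdiff_union_distrib, ← Finset.sdiff_sdiff_left']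

lemma of_erase (hx : x ∈ A) (h : Equatable G k (A.erase x) b) : Equatable G k A (b + 1) := by
  rw [← sdiff_singleton_eq_erase] at h
  simpa [add_comm] using of_sdiff (singleton_subset_iff.2 hx) h

end Equatable

lemma fk_le_of_equatable [Fintype V] {b : ℕ} (h : Equatable G k univ b) : fk G k ≤ b := by
  obtain ⟨S, hSA, hS, hS_eq⟩ := h
  exact (Nat.sInf_le (show #S ∈ {m | ∃ S, S ⊆ univ ∧ #S = m ∧ equates G k (univ \ S)} from
    ⟨S, hSA, rfl, hS_eq⟩)).trans hS

lemma equates_of_degOn_eq {W : Finset V} {τ : ℕ} (hWA : W ⊆ A) (hkW : k ≤ #W)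
    (hW : ∀ w ∈ W, degOn G A w = τ) (hout : ∀ v ∈ A, v ∉ W → degOn G A v ≤ τ) :
    equates G k A := by
  right
  obtain rfl | ⟨w₀, hw₀⟩ := W.eq_empty_or_nonempty
  · simp_all
  have hmax : maxDegOn G A = τ := by
    refine le_antisymm (Finset.sup_le fun v hv => ?_) ((hW w₀ hw₀).symm.trans_le
      (degOn_le_maxDegOn (hWA hw₀)))
    by_cases hvW : v ∈ W
    exacts [(hW v hvW).le, hout v hv hvW]
  exact hkW.trans (card_le_card fun w hw => mem_filter.2 ⟨hWA hw, (hW w hw).trans hmax.symm⟩)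

/-- Repeatedly deleting all (fewer than `k`) vertices of maximum degree lowers the maximum
degree each time. -/
lemma equatable_of_degOn_le {Δ : ℕ} (hdeg : ∀ v ∈ A, degOn G A v ≤ Δ)
    (hcard : (k - 1) * Δ + k ≤ #A) : Equatable G k A ((k - 1) * Δ) := by
  induction Δ generalizing A with
  | zero =>
    refine .of_equates (equates_of_degOn_eq subset_rfl (by omega) (fun w hw => ?_)
      fun v hv _ => hdeg v hv) _
    exact Nat.le_zero.1 (hdeg w hw)
  | succ Δ ih =>
    set top := A.filter fun v => degOn G A v = maxDegOn G A
    have htopA : top ⊆ A := filter_subset _ _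
    by_cases htop : k ≤ #top
    · exact .of_equates (Or.inr htop) _
    have hdeg' : ∀ v ∈ A \ top, degOn G (A \ top) v ≤ Δ := by
      intro v hv
      obtain ⟨hvA, hvtop⟩ := mem_sdiff.1 hv
      have hlt : degOn G A v < maxDegOn G A :=
        (degOn_le_maxDegOn hvA).lt_of_ne fun h => hvtop (mem_filter.2 ⟨hvA, h⟩)
      have hmax : maxDegOn G A ≤ Δ + 1 := Finset.sup_le hdeg
      have := degOn_mono (G := G) (sdiff_subset (s := A) (t := top)) v
      omega
    have hcard' : (k - 1) * Δ + k ≤ #(A \ top) := by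
      rw [card_sdiff_of_subset htopA]
      rw [mul_add_one] at hcard
      omega
    refine (Equatable.of_sdiff htopA (ih hdeg' hcard')).mono ?_
    rw [mul_add_one]
    omega

lemma exists_degree_threshold (hk : 0 < k) (hkA : k ≤ #A) :
    ∃ c, k ≤ #{v ∈ A | c ≤ degOn G A v} ∧ #{v ∈ A | c < degOn G A v} < k := by
  let enough (c : ℕ) : Prop := k ≤ #{v ∈ A | c ≤ degOn G A v}
  set c := Nat.findGreatest enough (maxDegOn G A)
  refine ⟨c, Nat.findGreatest_spec (P := enough) (Nat.zero_le _) (by simpa [enough]), ?_⟩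
  by_cases hc : c + 1 ≤ maxDegOn G A
  · exact not_le.1 (Nat.findGreatest_is_greatest (P := enough) (Nat.lt_succ_self c) hc)
  · convert hk
    refine card_eq_zero.2 (filter_eq_empty_iff.2 fun v hv hlt => hc ?_)
    exact hlt.trans_le (degOn_le_maxDegOn hv)

lemma exists_maxDegOn_sdiff_le {c m : ℕ} (hc : #{v ∈ A | c < degOn G A v} ≤ m)
    (hm : m ≤ #A) : ∃ D ⊆ A, #D = m ∧ maxDegOn G (A \ D) ≤ c := by
  obtain ⟨D, hHD, hDA, hD⟩ := exists_subsuperset_card_eq (filter_subset _ A) hc hm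
  refine ⟨D, hDA, hD, Finset.sup_le fun v hv => ?_⟩
  obtain ⟨hvA, hvD⟩ := mem_sdiff.1 hv
  have : ¬ c < degOn G A v := fun h => hvD (hHD (mem_filter.2 ⟨hvA, h⟩))
  exact (degOn_mono sdiff_subset v).trans (not_lt.1 this)

lemma equatable_of_card_degOn_gt_le {c : ℕ} (hc : #{v ∈ A | c < degOn G A v} ≤ k - 1)
    (hA : (k - 1) * (c + 1) + k ≤ #A) : Equatable G k A ((k - 1) * (c + 1)) := by
  obtain ⟨D, hDA, hD, hmax⟩ :=
    exists_maxDegOn_sdiff_le le_rfl (card_le_card (filter_subset (fun v => c < degOn G A v) A))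
  have hdeg : ∀ v ∈ A \ D, degOn G (A \ D) v ≤ c := fun v hv =>
    (degOn_le_maxDegOn hv).trans hmax
  have hcard : (k - 1) * c + k ≤ #(A \ D) := by
    rw [card_sdiff_of_subset hDA, hD]
    rw [mul_add_one] at hA
    omega
  refine (Equatable.of_sdiff hDA (equatable_of_degOn_le hdeg hcard)).mono ?_
  rw [mul_add_one]
  omega

lemma SimpleGraph.IsAcyclic.eq_of_adj_of_adj (hG : G.IsAcyclic) {v w u u' : V} (hvw : v ≠ w)
    (hvu : G.Adj v u) (hwu : G.Adj w u) (hvu' : G.Adj v u') (hwu' : G.Adj w u') : u = u' := by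
  have hp : (Walk.cons hvu (Walk.cons hwu.symm Walk.nil)).IsPath := by
    simp [Walk.isPath_def, hvu.ne, hwu.ne', hvw]
  have hp' : (Walk.cons hvu' (Walk.cons hwu'.symm Walk.nil)).IsPath := by
    simp [Walk.isPath_def, hvu'.ne, hwu'.ne', hvw]
  have := congrArg (fun p : G.Path v w => p.1.support)
    ((hG.subsingleton_path v w).elim ⟨_, hp⟩ ⟨_, hp'⟩)
  simpa using this

/-- In a forest `w'` shares at most one neighbour with each other vertex of `W`, so a degree
above `2 (#W - 1)` leaves a neighbour outside `W` adjacent to no other vertex of `W`. -/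
lemma exists_private_neighbor (hG : G.IsAcyclic) {W : Finset V} {w' : V} (hw' : w' ∈ W)
    (hdeg : 2 * (#W - 1) < degOn G A w') :
    ∃ u ∈ A, G.Adj w' u ∧ u ∉ W ∧ ∀ w ∈ W, w ≠ w' → ¬ G.Adj w u := by
  set N := A.filter fun u => G.Adj w' u
  set C := (W.erase w').biUnion fun w => N.filter fun u => G.Adj w u
  have hC : #C ≤ #W - 1 := by
    refine card_biUnion_le.trans ?_
    rw [← card_erase_of_mem hw', card_eq_sum_ones (W.erase w')]
    refine sum_le_sum fun w hw => card_le_one.2 fun u hu u' hu' => ?_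
    simp only [N, mem_filter] at hu hu'
    exact hG.eq_of_adj_of_adj (ne_of_mem_erase hw).symm hu.1.2 hu.2 hu'.1.2 hu'.2
  have hlt : #(W.erase w' ∪ C) < #N :=
    (card_union_le _ _).trans_lt (by rw [card_erase_of_mem hw']; exact hdeg.trans_le' (by omega))
  obtain ⟨u, huN, hu⟩ := exists_mem_notMem_of_card_lt_card hlt
  obtain ⟨huA, hadj⟩ := mem_filter.1 huN
  refine ⟨u, huA, hadj, fun huW => hu (mem_union_left _ (mem_erase.2 ⟨hadj.ne', huW⟩)),
    fun w hw hww' hwu => hu (mem_union_right _ ?_)⟩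
  exact mem_biUnion.2 ⟨w, mem_erase.2 ⟨hww', hw⟩, mem_filter.2 ⟨huN, hwu⟩⟩

/-- Deleting a private neighbour of a vertex of `W` whose degree exceeds `τ` lowers the excess
`∑ w ∈ W, (degOn G A w - τ)` by one without creating new vertices of degree above `τ`. -/
lemma equatable_of_excess_le (hG : G.IsAcyclic) {W : Finset V} {τ T : ℕ} (hWA : W ⊆ A)
    (hkW : k ≤ #W) (hτ : 2 * (#W - 1) ≤ τ) (hout : ∀ v ∈ A, v ∉ W → degOn G A v ≤ τ)
    (hW : ∀ w ∈ W, τ ≤ degOn G A w) (hexcess : ∑ w ∈ W, (degOn G A w - τ) ≤ T) :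
    Equatable G k A T := by
  induction T generalizing A with
  | zero =>
    refine .of_equates (equates_of_degOn_eq hWA hkW (fun w hw => ?_) hout) 0
    have := sum_eq_zero_iff.1 (Nat.le_zero.1 hexcess) w hw
    have := hW w hw
    omega
  | succ T ih =>
    by_cases hflat : ∀ w ∈ W, degOn G A w = τ
    · exact .of_equates (equates_of_degOn_eq hWA hkW hflat hout) _
    push Not at hflat
    obtain ⟨w', hw'W, hw'⟩ := hflat
    obtain ⟨u, huA, hadj, huW, hpriv⟩ :=
      exists_private_neighbor hG hw'W (hτ.trans_lt ((hW w' hw'W).lt_of_ne' hw'))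
    have hdeg_w' := degOn_erase_add_one_of_adj huA hadj
    have hdeg_W : ∀ w ∈ W.erase w', degOn G (A.erase u) w = degOn G A w := fun w hw =>
      degOn_erase_of_not_adj (hpriv w (mem_of_mem_erase hw) (ne_of_mem_erase hw))
    refine .of_erase huA (ih (fun w hw => mem_erase.2 ⟨fun h => huW (h ▸ hw), hWA hw⟩)
      (fun v hv hvW => (degOn_mono (erase_subset _ _) v).trans
        (hout v (mem_of_mem_erase hv) hvW)) (fun w hw => ?_) ?_)
    · by_cases h : w = w'
      · subst h
        have := hW w hw
        omega
      · rw [hdeg_W w (mem_erase.2 ⟨h, hw⟩)]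
        exact hW w hw
    · rw [← add_sum_erase _ _ hw'W] at hexcess ⊢
      rw [sum_congr rfl fun w hw => by rw [hdeg_W w hw]]
      have := hW w' hw'W
      omega

lemma equatable_of_degree_window (hG : G.IsAcyclic) {c : ℕ} (hck : 2 * (k - 1) ≤ c)
    (hge : k ≤ #{v ∈ A | c ≤ degOn G A v}) (hgt : #{v ∈ A | c < degOn G A v} ≤ k - 1) :
    Equatable G k A ((k - 1) * (maxDegOn G A - c)) := by
  set H := A.filter fun v => c < degOn G A v
  have hHge : H ⊆ A.filter fun v => c ≤ degOn G A v := fun v hv =>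
    mem_filter.2 ⟨(mem_filter.1 hv).1, (mem_filter.1 hv).2.le⟩
  obtain ⟨W, hHW, hW, hWk⟩ := exists_subsuperset_card_eq hHge (hgt.trans (Nat.sub_le k 1)) hge
  have hWA : W ⊆ A := hW.trans (filter_subset _ _)
  have houtH : ∀ v ∈ A, v ∉ H → degOn G A v ≤ c := fun v hv hvH =>
    not_lt.1 fun h => hvH (mem_filter.2 ⟨hv, h⟩)
  have hWc : ∀ w ∈ W, c ≤ degOn G A w := fun w hw => (mem_filter.1 (hW hw)).2
  refine equatable_of_excess_le hG hWA hWk.ge (by omega)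
    (fun v hv hvW => houtH v hv fun h => hvW (hHW h)) hWc ?_
  calc ∑ w ∈ W, (degOn G A w - c) = ∑ w ∈ H, (degOn G A w - c) := by
        refine (sum_subset hHW fun w hw hwH => ?_).symm
        have := houtH w (hWA hw) hwH
        have := hWc w hw
        omega
    _ ≤ ∑ _w ∈ H, (maxDegOn G A - c) :=
        sum_le_sum fun w hw => Nat.sub_le_sub_right (degOn_le_maxDegOn (filter_subset _ _ hw)) c
    _ ≤ (k - 1) * (maxDegOn G A - c) := by
        rw [sum_const, smul_eq_mul]
        exact Nat.mul_le_mul_right _ hgt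

def theta (P u : ℕ) : ℕ := (u - (2 * P ^ 2 + P)) * (u - P ^ 2)

lemma theta_eq_zero_of_le {P u : ℕ} (hu : u ≤ 2 * P ^ 2 + P) : theta P u = 0 := by
  simp [theta, Nat.sub_eq_zero_of_le hu]

lemma theta_add (P a : ℕ) : theta P (2 * P ^ 2 + P + a) = a * (P ^ 2 + P + a) := by
  rw [theta]
  congr 1 <;> omega

lemma theta_add_le {P u : ℕ} (hu : 2 * P ^ 2 + P < u) :
    theta P u + 2 * P ^ 3 ≤ theta P (u - P) + 2 * P * u := by
  obtain ⟨a, rfl⟩ : ∃ a, u = 2 * P ^ 2 + P + a := ⟨u - (2 * P ^ 2 + P), by omega⟩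
  rw [theta_add]
  rcases le_or_gt P a with hPa | haP
  · obtain ⟨w, rfl⟩ : ∃ w, a = P + w := ⟨a - P, by omega⟩
    rw [show 2 * P ^ 2 + P + (P + w) - P = 2 * P ^ 2 + P + w by omega, theta_add]
    nlinarith
  · rw [theta_eq_zero_of_le (by omega)]
    nlinarith

lemma sum_theta_ge (P Q : ℕ) :
    Q * (Q + 1) * (2 * Q + 1) + 3 * (P ^ 2 + P) * Q * (Q + 1)
      ≤ 6 * ∑ u ∈ range (2 * P ^ 2 + P + Q), theta P (u + 1) := by
  induction Q with
  | zero => simp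
  | succ Q ih =>
    have hterm := theta_add P (Q + 1)
    rw [← add_assoc] at hterm
    rw [← add_assoc, sum_range_succ, hterm]
    linarith

theorem theta_le_of_not_equatable (hG : G.IsAcyclic) (hk : 2 ≤ k) {b : ℕ} (hA : b + k ≤ #A)
    (hb : ¬ Equatable G k A b) : theta (k - 1) (b + 1) ≤ 2 * (k - 1) ^ 2 * maxDegOn G A := by
  obtain ⟨P, rfl⟩ : ∃ P, k = P + 1 := ⟨k - 1, by omega⟩
  rw [Nat.add_sub_cancel]
  induction b using Nat.strong_induction_on generalizing A with
  | _ b ih =>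
    rcases le_or_gt (b + 1) (2 * P ^ 2 + P) with hsmall | hlarge
    · rw [theta_eq_zero_of_le hsmall]
      exact Nat.zero_le _
    obtain ⟨c, hge, hgt⟩ := exists_degree_threshold (G := G) (by omega) (by omega : P + 1 ≤ #A)
    have hloop : b < P * (c + 1) := by
      by_contra h
      have hcost := equatable_of_card_degOn_gt_le (G := G) (A := A) (k := P + 1) (c := c)
      simp only [Nat.add_sub_cancel] at hcost
      exact hb ((hcost (by omega) (by omega)).mono (by omega))
    have hc : 2 * P ≤ c := by
      by_contra h
      have : P * (c + 1) ≤ P * (2 * P) := Nat.mul_le_mul_left P (by omega)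
      nlinarith
    have hwindow : P * c + b < P * maxDegOn G A := by
      by_contra h
      have hcost := equatable_of_degree_window (A := A) (k := P + 1) hG (c := c)
      simp only [Nat.add_sub_cancel] at hcost
      refine hb ((hcost hc hge (by omega)).mono ?_)
      rw [Nat.mul_sub]
      omega
    obtain ⟨D, hDA, hD, hmax⟩ :=
      exists_maxDegOn_sdiff_le (by omega : #{v ∈ A | c < degOn G A v} ≤ P) (by omega)
    have hrec := ih (b - P) (by omega) (by rw [card_sdiff_of_subset hDA]; omega)
      fun h => hb ((h.of_sdiff hDA).mono (by omega))
    rw [show b - P + 1 = b + 1 - P by omega] at hrec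
    have hstep := theta_add_le (P := P) hlarge
    calc theta P (b + 1) ≤ 2 * P ^ 2 * c + 2 * P * (b + 1) := by
          have := hrec.trans (Nat.mul_le_mul_left (2 * P ^ 2) hmax)
          omega
      _ = 2 * P * (P * c + (b + 1)) := by ring
      _ ≤ 2 * P * (P * maxDegOn G A) := Nat.mul_le_mul_left _ (by omega)
      _ = 2 * P ^ 2 * maxDegOn G A := by ring

theorem sum_theta_le_of_not_equatable (hG : G.IsAcyclic) (hk : 2 ≤ k) {b : ℕ}
    (hA : b + k ≤ #A) (hb : ¬ Equatable G k A b) :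
    ∑ u ∈ range (b + 1), theta (k - 1) (u + 1) ≤ (k - 1) ^ 2 * degSumOn G A := by
  induction b generalizing A with
  | zero =>
    rw [sum_range_one, theta_eq_zero_of_le (by omega)]
    exact Nat.zero_le _
  | succ b ih =>
    obtain ⟨x, hx, hxmax⟩ := exists_degOn_eq_maxDegOn (G := G) (card_pos.1 (by omega : 0 < #A))
    have hrec := ih (by rw [card_erase_of_mem hx]; omega) fun h => hb (h.of_erase hx)
    have htheta := theta_le_of_not_equatable hG hk hA hb
    rw [sum_range_succ, degSumOn_eq_degSumOn_erase_add hx, hxmax]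
    nlinarith

lemma SimpleGraph.IsAcyclic.card_edgeFinset_lt [Fintype V] [Nonempty V] (hG : G.IsAcyclic) :
    #G.edgeFinset < Fintype.card V := by
  obtain ⟨T, hGT, hT⟩ := exists_maximal_isAcyclic_of_le_isAcyclic (le_top (a := G)) hG
  have hTree : T.IsTree := T.maximal_isAcyclic_iff_isTree.1 (by simpa using hT)
  have := hTree.card_edgeFinset
  have := card_le_card (edgeFinset_subset_edgeFinset.2 hGT)
  omega

lemma degSumOn_univ_add_two_le [Fintype V] [Nonempty V] (hG : G.IsAcyclic) :
    degSumOn G univ + 2 ≤ 2 * Fintype.card V := by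
  have hdeg : ∀ v, degOn G univ v = G.degree v := fun v => by
    rw [← card_neighborFinset_eq_degree, neighborFinset_eq_filter]
    rfl
  have := hG.card_edgeFinset_lt
  rw [degSumOn, sum_congr rfl fun v _ => hdeg v, sum_degrees_eq_twice_card_edges]
  omega

lemma lt_sum_theta {P t m : ℕ} (hP : 1 ≤ P) (ht : 2 * P + 1 ≤ t)
    (hm : m + 4 ≤ 2 * (t + 1) ^ 3) :
    P ^ 2 * m < ∑ u ∈ range ((2 * P + 1) * t + 1), theta P (u + 1) := by
  obtain ⟨p, rfl⟩ : ∃ p, P = p + 1 := ⟨P - 1, by omega⟩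
  obtain ⟨s, rfl⟩ : ∃ s, t = 2 * p + 3 + s := ⟨t - (2 * p + 3), by omega⟩
  set Q := 2 * (p + 1) ^ 2 + 3 * (p + 1) + 2 + (2 * p + 3) * s
  have hlen : (2 * (p + 1) + 1) * (2 * p + 3 + s) + 1 = 2 * (p + 1) ^ 2 + (p + 1) + Q := by ring
  have hpoly : 12 * (p + 1) ^ 2 * (2 * p + 3 + s + 1) ^ 3
      ≤ Q * (Q + 1) * (2 * Q + 1) + 3 * ((p + 1) ^ 2 + (p + 1)) * Q * (Q + 1) := by
    -- expanded, the difference has only nonnegative coefficients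
    simp only [Q]
    zify
    rw [← sub_nonneg]
    ring_nf
    positivity
  have := sum_theta_ge (p + 1) Q
  rw [hlen]
  nlinarith

theorem fk_le_of_cube_le [Fintype V] (hG : G.IsAcyclic) (hk : 2 ≤ k) {t : ℕ}
    (ht : 2 * k - 1 ≤ t) (hlo : t ^ 3 ≤ Fintype.card V) (hhi : Fintype.card V < (t + 1) ^ 3) :
    fk G k ≤ (2 * k - 1) * t := by
  refine fk_le_of_equatable (by_contra fun hb => ?_)
  obtain ⟨P, rfl⟩ : ∃ P, k = P + 1 := ⟨k - 1, by omega⟩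
  rw [show 2 * (P + 1) - 1 = 2 * P + 1 by omega] at ht hb
  have hA : (2 * P + 1) * t + (P + 1) ≤ #(univ : Finset V) := by
    rw [card_univ]
    nlinarith
  have : Nonempty V := Fintype.card_pos_iff.1 (by rw [card_univ] at hA; omega)
  have hsum := sum_theta_le_of_not_equatable hG hk hA hb
  have hlt := lt_sum_theta (m := degSumOn G univ) (by omega) ht
    (by have := degSumOn_univ_add_two_le hG; omega)
  simp only [Nat.add_sub_cancel] at hsum
  omega

end Equating

lemma floor_rpow_one_third_spec (n : ℕ) : ⌊(n : ℝ) ^ ((1 : ℝ) / 3)⌋₊ ^ 3 ≤ n ∧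
    n < (⌊(n : ℝ) ^ ((1 : ℝ) / 3)⌋₊ + 1) ^ 3 := by
  set x := (n : ℝ) ^ ((1 : ℝ) / 3)
  have hx : 0 ≤ x := by positivity
  have hx3 : x ^ 3 = n := by
    simpa [x, one_div] using Real.rpow_inv_natCast_pow (Nat.cast_nonneg n) three_ne_zero
  constructor
  · exact_mod_cast (pow_le_pow_left₀ (Nat.cast_nonneg _) (Nat.floor_le hx) 3).trans hx3.le
  · exact_mod_cast hx3.symm.trans_lt (pow_lt_pow_left₀ (Nat.lt_floor_add_one x) hx three_ne_zero)

/-- If `k ≥ 2` and `F` is a forest on `n` vertices with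
`n^(1/3) ≥ 2k - 1`, then `f_k(F) ≤ (2k - 1) · ⌊n^(1/3)⌋`. -/
theorem stmt11 {V : Type*} [Fintype V] (F : SimpleGraph V) (hF : F.IsAcyclic)
    (k : ℕ) (hk : 2 ≤ k)
    (hn : 2 * (k : ℝ) - 1 ≤ (Fintype.card V : ℝ) ^ ((1 : ℝ) / 3)) :
    (fk F k : ℤ) ≤ (2 * (k : ℤ) - 1) * ⌊(Fintype.card V : ℝ) ^ ((1 : ℝ) / 3)⌋ := by
  obtain ⟨hlo, hhi⟩ := floor_rpow_one_third_spec (Fintype.card V)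
  have h2k : ((2 * k - 1 : ℕ) : ℝ) = 2 * (k : ℝ) - 1 := by
    push_cast [Nat.cast_sub (by omega : 1 ≤ 2 * k)]
    ring
  have ht := Nat.le_floor (h2k ▸ hn)
  rw [← Int.natCast_floor_eq_floor (by positivity)]
  have := fk_le_of_cube_le hF hk ht hlo hhi
  zify [(by omega : 1 ≤ 2 * k)] at this
  exact this
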